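/- arXiv:1806.06001 — 7 statements merged into one kernel-verified Lean document; each statement's English description precedes it below -/
import Mathlib

section
/- Let X be a completely regular Hausdorff (T3.5) space. If player II has a winning strategy in the Rothberger game G1(O_X,O_X), then player II has a winning strategy in the ω-Rothberger game G1(Ω_X,Ω_X). -/
open Set Filter Topology

/-- The list `[a 0, …, a (n-1)]` of the first `n` moves of a play `a`. -/
def hist {α : Type*} (a : ℕ → α) (n : ℕ) : List α :=
  List.ofFn fun i : Fin n => a i

section SelectionGames

variable {M : Type*}

/-- The selection principle `S1(A,B)`. -/
def S1 (A B : Set (Set M)) : Prop :=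
  ∀ a : ℕ → Set M, (∀ n, a n ∈ A) →
    ∃ b : ℕ → M, (∀ n, b n ∈ a n) ∧ Set.range b ∈ B

/-- The selection principle `Sfin(A,B)`. -/
def Sfin (A B : Set (Set M)) : Prop :=
  ∀ a : ℕ → Set M, (∀ n, a n ∈ A) →
    ∃ b : ℕ → Set M, (∀ n, b n ⊆ a n ∧ (b n).Finite) ∧ (⋃ n, b n) ∈ B

/-- Player I has a winning predetermined strategy in the selection game `G1(A,B)`:
a sequence of moves `σ n ∈ A`, depending only on the round number, such that
no legal sequence of responses by II produces a member of `B`. -/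
def IPredetWinsG1 (A B : Set (Set M)) : Prop :=
  ∃ σ : ℕ → Set M, (∀ n, σ n ∈ A) ∧
    ∀ b : ℕ → M, (∀ n, b n ∈ σ n) → Set.range b ∉ B

/-- Player I has a winning predetermined strategy in the selection game `Gfin(A,B)`. -/
def IPredetWinsGfin (A B : Set (Set M)) : Prop :=
  ∃ σ : ℕ → Set M, (∀ n, σ n ∈ A) ∧
    ∀ b : ℕ → Set M, (∀ n, b n ⊆ σ n ∧ (b n).Finite) → (⋃ n, b n) ∉ B

/-- Player I has a winning (perfect-information) strategy in `G1(A,B)`: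
I's move in round `n` depends on II's previous moves `b 0, …, b (n-1)`. -/
def IWinsG1 (A B : Set (Set M)) : Prop :=
  ∃ σ : List M → Set M, (∀ h, σ h ∈ A) ∧
    ∀ b : ℕ → M, (∀ n, b n ∈ σ (hist b n)) → Set.range b ∉ B

/-- Player II has a winning (perfect-information) strategy in `G1(A,B)`:
II's move in round `n` depends on I's previous moves `a 0, …, a (n-1)`
together with I's current move `a n`; it is legal and always produces a member of `B`. -/
def IIWinsG1 (A B : Set (Set M)) : Prop :=
  ∃ σ : List (Set M) → Set M → M,
    ∀ a : ℕ → Set M, (∀ n, a n ∈ A) →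
      (∀ n, σ (hist a n) (a n) ∈ a n) ∧
      Set.range (fun n => σ (hist a n) (a n)) ∈ B

/-- Player II has a winning Markov strategy in `G1(A,B)`: II's move depends only on
I's current move and the round number. -/
def IIMarkovWinsG1 (A B : Set (Set M)) : Prop :=
  ∃ σ : Set M → ℕ → M,
    ∀ a : ℕ → Set M, (∀ n, a n ∈ A) →
      (∀ n, σ (a n) n ∈ a n) ∧
      Set.range (fun n => σ (a n) n) ∈ B

end SelectionGames

section TopologicalGames

variable {X : Type*}

/-- `𝒰` is an open cover of the space `X`. -/
def IsOpenCover [TopologicalSpace X] (𝒰 : Set (Set X)) : Prop :=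
  (∀ U ∈ 𝒰, IsOpen U) ∧ ⋃₀ 𝒰 = Set.univ

/-- `𝒰` is an ω-cover of `X`: an open cover such that every finite subset of `X`
is contained in a single member of `𝒰`. -/
def IsOmegaCover [TopologicalSpace X] (𝒰 : Set (Set X)) : Prop :=
  IsOpenCover 𝒰 ∧ ∀ F : Finset X, ∃ U ∈ 𝒰, ↑F ⊆ U

/-- `D` is a closed discrete subset of the space. -/
def IsClosedDiscrete [TopologicalSpace X] (D : Set X) : Prop :=
  IsClosed D ∧ ∀ x ∈ D, ∃ U : Set X, IsOpen U ∧ U ∩ D = {x}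

/-- Player I has a winning predetermined strategy in the point-open game `PO(X)`. -/
def IPredetWinsPO (X : Type*) [TopologicalSpace X] : Prop :=
  ∃ p : ℕ → X, ∀ U : ℕ → Set X,
    (∀ n, IsOpen (U n) ∧ p n ∈ U n) → (⋃ n, U n) = Set.univ

/-- Player II has a winning Markov strategy in the point-open game `PO(X)`. -/
def IIMarkovWinsPO (X : Type*) [TopologicalSpace X] : Prop :=
  ∃ σ : X → ℕ → Set X,
    (∀ x n, IsOpen (σ x n) ∧ x ∈ σ x n) ∧
    ∀ p : ℕ → X, (⋃ n, σ (p n) n) ≠ Set.univ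

/-- Player I has a winning predetermined strategy in the finite-open game `FO(X)`. -/
def IPredetWinsFO (X : Type*) [TopologicalSpace X] : Prop :=
  ∃ p : ℕ → Finset X, ∀ U : ℕ → Set X,
    (∀ n, IsOpen (U n) ∧ ↑(p n) ⊆ U n) → (⋃ n, U n) = Set.univ

/-- Player II has a winning Markov strategy in the finite-open game `FO(X)`. -/
def IIMarkovWinsFO (X : Type*) [TopologicalSpace X] : Prop :=
  ∃ σ : Finset X → ℕ → Set X,
    (∀ F n, IsOpen (σ F n) ∧ ↑F ⊆ σ F n) ∧
    ∀ F : ℕ → Finset X, (⋃ n, σ (F n) n) ≠ Set.univ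

/-- Player I has a winning predetermined strategy in the game `ΩFO(X)`. -/
def IPredetWinsOmegaFO (X : Type*) [TopologicalSpace X] : Prop :=
  ∃ p : ℕ → Finset X, ∀ U : ℕ → Set X,
    (∀ n, IsOpen (U n) ∧ ↑(p n) ⊆ U n) → IsOmegaCover (Set.range U)

/-- Player I has a winning (perfect-information) strategy in the game `ΩFO(X)`:
I's move in round `n` depends on II's previous moves `U 0, …, U (n-1)`. -/
def IWinsOmegaFO (X : Type*) [TopologicalSpace X] : Prop :=
  ∃ σ : List (Set X) → Finset X, ∀ U : ℕ → Set X,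
    (∀ n, IsOpen (U n) ∧ ↑(σ (hist U n)) ⊆ U n) → IsOmegaCover (Set.range U)

/-- Player II has a winning (perfect-information) strategy in the game `ΩFO(X)`:
II's move in round `n` depends on I's previous moves together with I's current move. -/
def IIWinsOmegaFO (X : Type*) [TopologicalSpace X] : Prop :=
  ∃ σ : List (Finset X) → Finset X → Set X,
    (∀ h F, IsOpen (σ h F) ∧ ↑F ⊆ σ h F) ∧
    ∀ F : ℕ → Finset X, ¬ IsOmegaCover (Set.range fun n => σ (hist F n) (F n))

/-- Player II has a winning Markov strategy in the game `ΩFO(X)`. -/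
def IIMarkovWinsOmegaFO (X : Type*) [TopologicalSpace X] : Prop :=
  ∃ σ : Finset X → ℕ → Set X,
    (∀ F n, IsOpen (σ F n) ∧ ↑F ⊆ σ F n) ∧
    ∀ F : ℕ → Finset X, ¬ IsOmegaCover (Set.range fun n => σ (F n) n)

/-- Player II has a winning tactic in the game `ΩPO(X)`: II's move depends only on
I's current move. -/
def IITacticWinsOmegaPO (X : Type*) [TopologicalSpace X] : Prop :=
  ∃ σ : X → Set X,
    (∀ x, IsOpen (σ x) ∧ x ∈ σ x) ∧
    ∀ p : ℕ → X, ¬ IsOmegaCover (Set.range fun n => σ (p n))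

/-- Player I has a winning (perfect-information) strategy in the discrete
selection game `CD(Y)`. -/
def IWinsCD (Y : Type*) [TopologicalSpace Y] : Prop :=
  ∃ σ : List Y → Set Y,
    (∀ h, IsOpen (σ h) ∧ (σ h).Nonempty) ∧
    ∀ y : ℕ → Y, (∀ n, y n ∈ σ (hist y n)) → ¬ IsClosedDiscrete (Set.range y)

/-- Player I has a winning predetermined strategy in the discrete selection game `CD(Y)`. -/
def IPredetWinsCD (Y : Type*) [TopologicalSpace Y] : Prop :=
  ∃ U : ℕ → Set Y, (∀ n, IsOpen (U n) ∧ (U n).Nonempty) ∧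
    ∀ y : ℕ → Y, (∀ n, y n ∈ U n) → ¬ IsClosedDiscrete (Set.range y)

/-- Player II has a winning (perfect-information) strategy in the discrete
selection game `CD(Y)`. -/
def IIWinsCD (Y : Type*) [TopologicalSpace Y] : Prop :=
  ∃ σ : List (Set Y) → Set Y → Y,
    ∀ U : ℕ → Set Y, (∀ n, IsOpen (U n) ∧ (U n).Nonempty) →
      (∀ n, σ (hist U n) (U n) ∈ U n) ∧
      IsClosedDiscrete (Set.range fun n => σ (hist U n) (U n))

/-- Player II has a winning Markov strategy in the discrete selection game `CD(Y)`. -/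
def IIMarkovWinsCD (Y : Type*) [TopologicalSpace Y] : Prop :=
  ∃ σ : Set Y → ℕ → Y,
    ∀ U : ℕ → Set Y, (∀ n, IsOpen (U n) ∧ (U n).Nonempty) →
      (∀ n, σ (U n) n ∈ U n) ∧
      IsClosedDiscrete (Set.range fun n => σ (U n) n)

/-- Player II has a winning (perfect-information) strategy in the closure game `CL(Y,x)`. -/
def IIWinsCL (Y : Type*) [TopologicalSpace Y] (x : Y) : Prop :=
  ∃ σ : List (Set Y) → Set Y → Y,
    ∀ U : ℕ → Set Y, (∀ n, IsOpen (U n) ∧ (U n).Nonempty) →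
      (∀ n, σ (hist U n) (U n) ∈ U n) ∧
      x ∉ closure (Set.range fun n => σ (hist U n) (U n))

/-- Player II has a winning Markov strategy in the closure game `CL(Y,x)`. -/
def IIMarkovWinsCL (Y : Type*) [TopologicalSpace Y] (x : Y) : Prop :=
  ∃ σ : Set Y → ℕ → Y,
    ∀ U : ℕ → Set Y, (∀ n, IsOpen (U n) ∧ (U n).Nonempty) →
      (∀ n, σ (U n) n ∈ U n) ∧
      x ∉ closure (Set.range fun n => σ (U n) n)

/-- Player II has a winning (perfect-information) strategy in Gruenhage's
clustering game at `x`. -/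
def IIWinsGruCluster (Y : Type*) [TopologicalSpace Y] (x : Y) : Prop :=
  ∃ σ : List (Set Y) → Set Y → Y,
    ∀ U : ℕ → Set Y, (∀ n, IsOpen (U n) ∧ x ∈ U n) →
      (∀ n, σ (hist U n) (U n) ∈ U n) ∧
      ¬ MapClusterPt x atTop (fun n => σ (hist U n) (U n))

/-- Player II has a winning Markov strategy in Gruenhage's clustering game at `x`. -/
def IIMarkovWinsGruCluster (Y : Type*) [TopologicalSpace Y] (x : Y) : Prop :=
  ∃ σ : Set Y → ℕ → Y,
    ∀ U : ℕ → Set Y, (∀ n, IsOpen (U n) ∧ x ∈ U n) →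
      (∀ n, σ (U n) n ∈ U n) ∧
      ¬ MapClusterPt x atTop (fun n => σ (U n) n)

/-- Player I has a winning predetermined strategy in Gruenhage's clustering game at `x`. -/
def IPredetWinsGruCluster (Y : Type*) [TopologicalSpace Y] (x : Y) : Prop :=
  ∃ U : ℕ → Set Y, (∀ n, IsOpen (U n) ∧ x ∈ U n) ∧
    ∀ y : ℕ → Y, (∀ n, y n ∈ U n) → MapClusterPt x atTop y

/-- Player I has a winning predetermined strategy in Gruenhage's W-game at `x`
(I wins when II's points converge to `x`). -/
def IPredetWinsGruW (Y : Type*) [TopologicalSpace Y] (x : Y) : Prop :=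
  ∃ U : ℕ → Set Y, (∀ n, IsOpen (U n) ∧ x ∈ U n) ∧
    ∀ y : ℕ → Y, (∀ n, y n ∈ U n) → Filter.Tendsto y atTop (𝓝 x)

end TopologicalGames

/-- `Cp X`: the continuous real-valued functions on `X` with the topology of
pointwise convergence (inherited from the product topology on `X → ℝ`). -/
def Cp (X : Type*) [TopologicalSpace X] : Type _ := {f : X → ℝ // Continuous f}

instance (X : Type*) [TopologicalSpace X] : TopologicalSpace (Cp X) :=
  inferInstanceAs (TopologicalSpace {f : X → ℝ // Continuous f})

/-- The constant zero function, as an element of `Cp X`. -/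
def Cp.zero (X : Type*) [TopologicalSpace X] : Cp X := ⟨fun _ => 0, continuous_const⟩

/-!
A winning strategy `σ₀` for II in the Rothberger game has at every legal position `l` a *focal
point* `p`: every neighbourhood of `p` contains the answer of `σ₀` at `l` to some open cover
(otherwise the neighbourhoods witnessing the failure form an open cover whose answer lies in one
of them).

By induction on `k` we build strategies for II in the ω-game that put every set of at most `k`
points into one of their answers. The rounds are split into the fibres of `Nat.pair`; fibre `i`
is attached to a position `lᵢ` of the Rothberger game and is answered by the level-`k` strategy
restricted to the members containing the focal point of `lᵢ`. Each answer `U` in fibre `i`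
spawns the position `lᵢ ++ [𝒲]`, where `𝒲` is an open cover with `σ₀ lᵢ 𝒲 ⊆ U`. If a set
`insert x G` with `#G ≤ k` were never caught, then in every fibre some answer catches `G` and
hence misses `x`, so every position extends to one whose last answer misses `x`: this gives a
play of open covers against which `σ₀` never covers `x`. Interleaving all levels yields the
strategy for the ω-game.
-/

section Plays

variable {α β : Type*}

theorem length_hist (a : ℕ → α) (n : ℕ) : (hist a n).length = n := List.length_ofFn

theorem hist_succ (a : ℕ → α) (n : ℕ) : hist a (n + 1) = hist a n ++ [a n] := by
  rw [hist, List.ofFn_succ', List.concat_eq_append]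
  rfl

theorem getD_hist (a : ℕ → α) {m n : ℕ} (h : m < n) (d : α) : (hist a n).getD m d = a m := by
  rw [List.getD_eq_getElem _ _ (by rwa [length_hist])]
  simp [hist]

theorem hist_getD_length (l : List α) (d : α) : hist (fun m => l.getD m d) l.length = l := by
  simp [hist]

theorem exists_forall_hist_of_forall_exists {P : List α → Prop} {Q : List α → α → Prop}
    (h₀ : P []) (h : ∀ l, P l → ∃ w, Q l w ∧ P (l ++ [w])) :
    ∃ c : ℕ → α, ∀ n, Q (hist c n) (c n) := by
  choose w hwQ hwP using h
  let L : ℕ → {l // P l} := fun n =>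
    Nat.rec ⟨[], h₀⟩ (fun _ l => ⟨l.1 ++ [w l.1 l.2], hwP _ l.2⟩) n
  have hist_eq : ∀ n, hist (fun m => w (L m).1 (L m).2) n = (L n).1 := by
    intro n
    induction n with
    | zero => rfl
    | succ n ih => rw [hist_succ, ih]
  exact ⟨fun m => w (L m).1 (L m).2, fun n => by rw [hist_eq]; exact hwQ _ _⟩

/-- A strategy presented as a map on whole plays: the answer in round `n` may depend only on the
first `n + 1` moves. -/
def IsCausal (Φ : (ℕ → α) → ℕ → β) : Prop :=
  ∀ ⦃a a' : ℕ → α⦄ ⦃n : ℕ⦄, (∀ m ≤ n, a m = a' m) → Φ a n = Φ a' n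

theorem IsCausal.exists_strategy {Φ : (ℕ → α) → ℕ → β} (hΦ : IsCausal Φ) :
    ∃ σ : List α → α → β, ∀ a n, σ (hist a n) (a n) = Φ a n := by
  refine ⟨fun l x => Φ (fun m => (l ++ [x]).getD m x) l.length, fun a n => ?_⟩
  simp only [← hist_succ, length_hist]
  exact hΦ fun m hm => getD_hist a (Nat.lt_succ_of_le hm) _

theorem fibre_eq_of_forall_le {a a' : ℕ → α} {n : ℕ} (h : ∀ m ≤ n, a m = a' m) :
    ∀ j ≤ (Nat.unpair n).2,
      a (Nat.pair (Nat.unpair n).1 j) = a' (Nat.pair (Nat.unpair n).1 j) := by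
  intro j hj
  refine h _ ?_
  calc Nat.pair (Nat.unpair n).1 j ≤ Nat.pair (Nat.unpair n).1 (Nat.unpair n).2 :=
        (StrictMono.monotone fun _ _ => Nat.pair_lt_pair_right _) hj
    _ = n := Nat.pair_unpair n

end Plays

section Covers

variable {X : Type*} [TopologicalSpace X]

theorem isOmegaCover_of_forall_finset {𝒰 : Set (Set X)} (hopen : ∀ U ∈ 𝒰, IsOpen U)
    (h : ∀ F : Finset X, ∃ U ∈ 𝒰, ↑F ⊆ U) : IsOmegaCover 𝒰 := by
  refine ⟨⟨hopen, sUnion_eq_univ_iff.2 fun x => ?_⟩, h⟩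
  obtain ⟨U, hU, hxU⟩ := h {x}
  exact ⟨U, hU, hxU (by simp)⟩

theorem IsOmegaCover.sep_mem {𝒰 : Set (Set X)} (h : IsOmegaCover 𝒰) (p : X) :
    IsOmegaCover {U ∈ 𝒰 | p ∈ U} := by
  classical
  refine isOmegaCover_of_forall_finset (fun U hU => h.1.1 U hU.1) fun F => ?_
  obtain ⟨U, hU, hFU⟩ := h.2 (insert p F)
  rw [Finset.coe_insert, insert_subset_iff] at hFU
  exact ⟨U, ⟨hU, hFU.1⟩, hFU.2⟩

theorem IsOmegaCover.nonempty {𝒰 : Set (Set X)} (h : IsOmegaCover 𝒰) : 𝒰.Nonempty :=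
  let ⟨U, hU, _⟩ := h.2 ∅
  ⟨U, hU⟩

end Covers

section Games

variable {M : Type*}

def IsIIWinningG1 (A B : Set (Set M)) (σ : List (Set M) → Set M → M) : Prop :=
  ∀ a : ℕ → Set M, (∀ n, a n ∈ A) →
    (∀ n, σ (hist a n) (a n) ∈ a n) ∧ Set.range (fun n => σ (hist a n) (a n)) ∈ B

theorem IsIIWinningG1.mem {A B : Set (Set M)} {σ : List (Set M) → Set M → M}
    (hσ : IsIIWinningG1 A B σ) {l : List (Set M)} (hl : ∀ x ∈ l, x ∈ A) {x : Set M}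
    (hx : x ∈ A) : σ l x ∈ x := by
  have hplay : ∀ m, l.getD m x ∈ A := fun m => by
    rcases lt_or_ge m l.length with hm | hm
    · exact List.getD_eq_getElem _ _ hm ▸ hl _ (List.getElem_mem hm)
    · rwa [List.getD_eq_default _ _ hm]
  have := (hσ _ hplay).1 l.length
  rwa [hist_getD_length, List.getD_eq_default _ _ le_rfl] at this

end Games

section Rothberger

variable {X : Type*} [TopologicalSpace X] {σ₀ : List (Set (Set X)) → Set (Set X) → Set X}

theorem IsIIWinningG1.nonempty {B : Set (Set (Set X))}
    (hσ : IsIIWinningG1 {𝒰 : Set (Set X) | IsOpenCover 𝒰} B σ₀) : Nonempty X := by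
  by_contra hX
  rw [not_nonempty_iff] at hX
  have hempty : IsOpenCover (∅ : Set (Set X)) := ⟨by simp, Subsingleton.elim _ _⟩
  exact (hσ (fun _ => ∅) fun _ => hempty).1 0

def IsFocal (σ₀ : List (Set (Set X)) → Set (Set X) → Set X) (l : List (Set (Set X))) (p : X) :
    Prop :=
  ∀ U, IsOpen U → p ∈ U → ∃ 𝒲, IsOpenCover 𝒲 ∧ σ₀ l 𝒲 ⊆ U

theorem IsIIWinningG1.exists_isFocal {B : Set (Set (Set X))}
    (hσ : IsIIWinningG1 {𝒰 : Set (Set X) | IsOpenCover 𝒰} B σ₀) {l : List (Set (Set X))}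
    (hl : ∀ 𝒰 ∈ l, IsOpenCover 𝒰) : ∃ p, IsFocal σ₀ l p := by
  by_contra! h
  simp only [IsFocal, not_forall, not_exists, not_and] at h
  choose U hUopen hpU hU using h
  have hcover : IsOpenCover (range U) :=
    ⟨forall_mem_range.2 hUopen, sUnion_eq_univ_iff.2 fun p => ⟨U p, mem_range_self p, hpU p⟩⟩
  obtain ⟨p, hp⟩ := hσ.mem hl hcover
  exact hU p _ hcover hp.ge

theorem IsIIWinningG1.not_forall_exists_not_mem
    (hσ : IsIIWinningG1 {𝒰 : Set (Set X) | IsOpenCover 𝒰} {𝒰 | IsOpenCover 𝒰} σ₀) (x : X)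
    {P : List (Set (Set X)) → Prop} (h₀ : P []) :
    ¬ ∀ l, P l → ∃ 𝒲, (IsOpenCover 𝒲 ∧ x ∉ σ₀ l 𝒲) ∧ P (l ++ [𝒲]) := by
  intro h
  obtain ⟨c, hc⟩ := exists_forall_hist_of_forall_exists h₀ h
  obtain ⟨_, ⟨n, rfl⟩, hxn⟩ := sUnion_eq_univ_iff.1 (hσ c fun n => (hc n).1).2.2 x
  exact (hc n).2 hxn

open Classical in
noncomputable def forcingCover (σ₀ : List (Set (Set X)) → Set (Set X) → Set X)
    (l : List (Set (Set X))) (U : Set X) : Set (Set X) :=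
  if h : ∃ 𝒲, IsOpenCover 𝒲 ∧ σ₀ l 𝒲 ⊆ U then h.choose else {univ}

theorem isOpenCover_forcingCover (l : List (Set (Set X))) (U : Set X) :
    IsOpenCover (forcingCover σ₀ l U) := by
  unfold forcingCover
  split_ifs with h
  · exact h.choose_spec.1
  · exact ⟨by simp, by simp⟩

theorem forcingCover_subset_of_exists {l : List (Set (Set X))} {U : Set X}
    (h : ∃ 𝒲, IsOpenCover 𝒲 ∧ σ₀ l 𝒲 ⊆ U) : σ₀ l (forcingCover σ₀ l U) ⊆ U := by
  rw [forcingCover, dif_pos h]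
  exact h.choose_spec.2

variable [Nonempty X]

noncomputable def focal (σ₀ : List (Set (Set X)) → Set (Set X) → Set X)
    (l : List (Set (Set X))) : X :=
  Classical.epsilon (IsFocal σ₀ l)

theorem IsIIWinningG1.forcingCover_subset {B : Set (Set (Set X))}
    (hσ : IsIIWinningG1 {𝒰 : Set (Set X) | IsOpenCover 𝒰} B σ₀) {l : List (Set (Set X))}
    (hl : ∀ 𝒰 ∈ l, IsOpenCover 𝒰) {U : Set X} (hU : IsOpen U) (hfocal : focal σ₀ l ∈ U) :
    σ₀ l (forcingCover σ₀ l U) ⊆ U :=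
  forcingCover_subset_of_exists (Classical.epsilon_spec (hσ.exists_isFocal hl) U hU hfocal)

end Rothberger

section Levels

variable {X : Type*} [TopologicalSpace X]

def CatchesUpTo (k : ℕ) (τ : (ℕ → Set (Set X)) → ℕ → Set X) : Prop :=
  ∀ b : ℕ → Set (Set X), (∀ n, IsOmegaCover (b n)) →
    (∀ n, τ b n ∈ b n) ∧ ∀ G : Finset X, G.card ≤ k → ∃ n, ↑G ⊆ τ b n

variable [Nonempty X] (σ₀ : List (Set (Set X)) → Set (Set X) → Set X)
  (τ : (ℕ → Set (Set X)) → ℕ → Set X)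

/-- The answer in round `n` when the fibre `(Nat.unpair n).1` sits at the position `l`. -/
noncomputable def fibreAnswer (b : ℕ → Set (Set X)) (l : List (Set (Set X))) (n : ℕ) : Set X :=
  τ (fun j => {U ∈ b (Nat.pair (Nat.unpair n).1 j) | focal σ₀ l ∈ U}) (Nat.unpair n).2

/-- The position of the Rothberger game reached by fibre `i` is `node σ₀ τ b i`;
round `n` spawns position `n + 1`. -/
noncomputable def node (b : ℕ → Set (Set X)) : ℕ → List (Set (Set X))
  | 0 => []
  | n + 1 =>
    node b (Nat.unpair n).1 ++
      [forcingCover σ₀ (node b (Nat.unpair n).1) (fibreAnswer σ₀ τ b (node b (Nat.unpair n).1) n)]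
decreasing_by exact Nat.lt_succ_of_le (Nat.unpair_left_le n)

noncomputable def succLevel (b : ℕ → Set (Set X)) (n : ℕ) : Set X :=
  fibreAnswer σ₀ τ b (node σ₀ τ b (Nat.unpair n).1) n

variable {σ₀ τ} {b : ℕ → Set (Set X)}

theorem node_zero : node σ₀ τ b 0 = [] := by
  rw [node]

theorem node_succ (n : ℕ) :
    node σ₀ τ b (n + 1) =
      node σ₀ τ b (Nat.unpair n).1 ++
        [forcingCover σ₀ (node σ₀ τ b (Nat.unpair n).1) (succLevel σ₀ τ b n)] := by
  rw [node]
  rfl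

theorem succLevel_pair (i j : ℕ) :
    succLevel σ₀ τ b (Nat.pair i j) =
      τ (fun j => {U ∈ b (Nat.pair i j) | focal σ₀ (node σ₀ τ b i) ∈ U}) j := by
  simp only [succLevel, fibreAnswer, Nat.unpair_pair]

theorem isOpenCover_of_mem_node (n : ℕ) : ∀ 𝒰 ∈ node σ₀ τ b n, IsOpenCover 𝒰 := by
  induction n using Nat.strong_induction_on with
  | _ n ih =>
    cases n with
    | zero => simp [node_zero]
    | succ n =>
      rw [node_succ]
      intro 𝒰 h𝒰
      rcases List.mem_append.1 h𝒰 with h𝒰 | h𝒰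
      · exact ih _ (Nat.lt_succ_of_le (Nat.unpair_left_le n)) 𝒰 h𝒰
      · rw [List.mem_singleton.1 h𝒰]
        exact isOpenCover_forcingCover _ _

theorem succLevel_pair_mem {k : ℕ} (hτ : CatchesUpTo k τ)
    (hb : ∀ n, IsOmegaCover (b n)) (i j : ℕ) :
    succLevel σ₀ τ b (Nat.pair i j) ∈ b (Nat.pair i j) ∧
      focal σ₀ (node σ₀ τ b i) ∈ succLevel σ₀ τ b (Nat.pair i j) := by
  rw [succLevel_pair]
  exact (hτ _ fun j => (hb _).sep_mem _).1 j

theorem catchesUpTo_succLevel {k : ℕ} (hσ : IsIIWinningG1 {𝒰 : Set (Set X) | IsOpenCover 𝒰}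
      {𝒰 | IsOpenCover 𝒰} σ₀) (hτ : CatchesUpTo k τ) :
    CatchesUpTo (k + 1) (succLevel σ₀ τ) := by
  classical
  intro b hb
  refine ⟨fun n => Nat.pair_unpair n ▸ (succLevel_pair_mem (σ₀ := σ₀) hτ hb _ _).1,
    fun G hG => ?_⟩
  obtain rfl | ⟨x, hx⟩ := G.eq_empty_or_nonempty
  · exact ⟨0, by simp⟩
  by_contra! hmiss
  refine hσ.not_forall_exists_not_mem x (P := (· ∈ range (node σ₀ τ b))) ⟨0, node_zero⟩ ?_
  rintro _ ⟨i, rfl⟩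
  obtain ⟨j, hj⟩ := (hτ _ fun j => (hb _).sep_mem (focal σ₀ (node σ₀ τ b i))).2 (G.erase x)
    (by rw [Finset.card_erase_of_mem hx]; omega)
  rw [← succLevel_pair (σ₀ := σ₀) (τ := τ)] at hj
  have hxU : x ∉ succLevel σ₀ τ b (Nat.pair i j) := fun hxU =>
    hmiss _ (by rw [← Finset.insert_erase hx, Finset.coe_insert]; exact insert_subset hxU hj)
  obtain ⟨hmem, hfocal⟩ := succLevel_pair_mem (σ₀ := σ₀) hτ hb i j
  refine ⟨forcingCover σ₀ (node σ₀ τ b i) (succLevel σ₀ τ b (Nat.pair i j)),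
    ⟨isOpenCover_forcingCover _ _, fun hx' => hxU ?_⟩, Nat.pair i j + 1, ?_⟩
  · exact hσ.forcingCover_subset (isOpenCover_of_mem_node i) ((hb _).1.1 _ hmem) hfocal hx'
  · rw [node_succ, Nat.unpair_pair]

theorem fibreAnswer_eq_of_forall_le (hτ : IsCausal τ) {b b' : ℕ → Set (Set X)} {n : ℕ}
    (h : ∀ m ≤ n, b m = b' m) (l : List (Set (Set X))) :
    fibreAnswer σ₀ τ b l n = fibreAnswer σ₀ τ b' l n :=
  hτ fun j hj => by rw [fibre_eq_of_forall_le h j hj]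

theorem node_eq_of_forall_lt (hτ : IsCausal τ) {b b' : ℕ → Set (Set X)} {n : ℕ}
    (h : ∀ m < n, b m = b' m) : node σ₀ τ b n = node σ₀ τ b' n := by
  induction n using Nat.strong_induction_on with
  | _ n ih =>
    cases n with
    | zero => rw [node_zero, node_zero]
    | succ n =>
      have hi := Nat.lt_succ_of_le (Nat.unpair_left_le n)
      rw [node_succ, node_succ, succLevel, succLevel,
        ih _ hi fun m hm => h m (hm.trans hi),
        fibreAnswer_eq_of_forall_le hτ fun m hm => h m (Nat.lt_succ_of_le hm)]

theorem isCausal_succLevel (hτ : IsCausal τ) : IsCausal (succLevel σ₀ τ) := by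
  intro b b' n h
  rw [succLevel, succLevel,
    node_eq_of_forall_lt hτ fun m hm => h m (hm.le.trans (Nat.unpair_left_le n)),
    fibreAnswer_eq_of_forall_le hτ h]

variable (σ₀)

noncomputable def level : ℕ → (ℕ → Set (Set X)) → ℕ → Set X
  | 0 => fun b n => Classical.epsilon (· ∈ b n)
  | k + 1 => succLevel σ₀ (level k)

theorem isCausal_level (k : ℕ) : IsCausal (level σ₀ k) := by
  induction k with
  | zero => exact fun b b' n h => by simp only [level, h n le_rfl]
  | succ k ih => exact isCausal_succLevel ih

variable {σ₀}

theorem catchesUpTo_level (hσ : IsIIWinningG1 {𝒰 : Set (Set X) | IsOpenCover 𝒰}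
      {𝒰 | IsOpenCover 𝒰} σ₀) (k : ℕ) : CatchesUpTo k (level σ₀ k) := by
  induction k with
  | zero =>
    refine fun b hb => ⟨fun n => Classical.epsilon_spec (hb n).nonempty, fun G hG => ?_⟩
    rw [Finset.card_eq_zero.1 (Nat.le_zero.1 hG)]
    exact ⟨0, by simp⟩
  | succ k ih => exact catchesUpTo_succLevel hσ ih

variable (σ₀)

noncomputable def omegaStrategy (b : ℕ → Set (Set X)) (n : ℕ) : Set X :=
  level σ₀ (Nat.unpair n).1 (fun j => b (Nat.pair (Nat.unpair n).1 j)) (Nat.unpair n).2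

theorem isCausal_omegaStrategy : IsCausal (omegaStrategy σ₀) :=
  fun _ _ _ h => isCausal_level σ₀ _ (fibre_eq_of_forall_le h)

variable {σ₀}

theorem omegaStrategy_mem_and_isOmegaCover (hσ : IsIIWinningG1 {𝒰 : Set (Set X) | IsOpenCover 𝒰}
      {𝒰 | IsOpenCover 𝒰} σ₀) (hb : ∀ n, IsOmegaCover (b n)) :
    (∀ n, omegaStrategy σ₀ b n ∈ b n) ∧ IsOmegaCover (range (omegaStrategy σ₀ b)) := by
  have hcatch k := catchesUpTo_level hσ k (fun j => b (Nat.pair k j)) fun _ => hb _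
  have hmem n : omegaStrategy σ₀ b n ∈ b n := by
    have := (hcatch (Nat.unpair n).1).1 (Nat.unpair n).2
    rwa [Nat.pair_unpair] at this
  refine ⟨hmem, isOmegaCover_of_forall_finset
    (forall_mem_range.2 fun n => (hb n).1.1 _ (hmem n)) fun G => ?_⟩
  obtain ⟨j, hj⟩ := (hcatch G.card).2 G le_rfl
  exact ⟨_, mem_range_self (Nat.pair G.card j), by simpa [omegaStrategy] using hj⟩

end Levels

theorem II_wins_rothberger_implies_II_wins_omega_rothberger_general
    (X : Type*) [TopologicalSpace X]
    (h : IIWinsG1 {𝒰 : Set (Set X) | IsOpenCover 𝒰} {𝒰 : Set (Set X) | IsOpenCover 𝒰}) :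
    IIWinsG1 {𝒰 : Set (Set X) | IsOmegaCover 𝒰} {𝒰 : Set (Set X) | IsOmegaCover 𝒰} := by
  obtain ⟨σ₀, hσ⟩ : ∃ σ₀, IsIIWinningG1 {𝒰 : Set (Set X) | IsOpenCover 𝒰} {𝒰 | IsOpenCover 𝒰} σ₀ :=
    h
  have := hσ.nonempty
  obtain ⟨σ, hσ_eq⟩ := (isCausal_omegaStrategy σ₀).exists_strategy
  refine ⟨σ, fun a ha => ?_⟩
  simp only [hσ_eq]
  exact omegaStrategy_mem_and_isOmegaCover hσ ha

/-- For a T3.5 space `X`, if II has a winning strategy in the Rothberger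
game `G1(O_X, O_X)`, then II has a winning strategy in the ω-Rothberger game
`G1(Ω_X, Ω_X)`. -/
theorem II_wins_rothberger_implies_II_wins_omega_rothberger
    (X : Type*) [TopologicalSpace X] [T35Space X]
    (h : IIWinsG1 {𝒰 : Set (Set X) | IsOpenCover 𝒰} {𝒰 : Set (Set X) | IsOpenCover 𝒰}) :
    IIWinsG1 {𝒰 : Set (Set X) | IsOmegaCover 𝒰} {𝒰 : Set (Set X) | IsOmegaCover 𝒰} :=
  II_wins_rothberger_implies_II_wins_omega_rothberger_general X h
end

section
/- Let X be a topological space. Player II has a winning Markov strategy in the Rothberger game G1(O_X,O_X) if and only if player I has a winning predetermined strategy in the point-open game PO(X). -/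
open Set Filter Topology

/-!
If `σ` is a winning Markov strategy for II in the Rothberger game, then in each round `n`
some point `xₙ` has every open neighbourhood containing a response `σ 𝒰 n` to some open
cover `𝒰`: otherwise the neighbourhoods witnessing the failure form an open cover whose
response lies in none of them. Playing `xₙ` in round `n` wins `PO(X)` for I, since II's
answers `Uₙ ∋ xₙ` contain responses of `σ` to a sequence of covers, and these cover `X`.
Conversely, if I wins `PO(X)` by playing `xₙ`, II answers the cover of round `n` by a
member containing `xₙ`.
-/

section RothbergerPointOpen

variable {X : Type*} [TopologicalSpace X]

namespace IsOpenCover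

theorem exists_mem_of_mem {𝒰 : Set (Set X)} (h𝒰 : IsOpenCover 𝒰) (x : X) :
    ∃ U ∈ 𝒰, x ∈ U :=
  sUnion_eq_univ_iff.1 h𝒰.2 x

theorem range {ι : Type*} {U : ι → Set X} (hU : ∀ i, IsOpen (U i))
    (hcov : ∀ x, ∃ i, x ∈ U i) : IsOpenCover (Set.range U) :=
  ⟨forall_mem_range.2 hU, sUnion_eq_univ_iff.2 fun x =>
    let ⟨i, hi⟩ := hcov x; ⟨U i, ⟨i, rfl⟩, hi⟩⟩

end IsOpenCover

theorem exists_forall_isOpen_exists_isOpenCover_subset {τ : Set (Set X) → Set X}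
    (hτ : ∀ 𝒰, IsOpenCover 𝒰 → τ 𝒰 ∈ 𝒰) :
    ∃ x : X, ∀ V, IsOpen V → x ∈ V → ∃ 𝒰, IsOpenCover 𝒰 ∧ τ 𝒰 ⊆ V := by
  by_contra! h
  choose U hU hxU hnot using h
  have hcov : IsOpenCover (Set.range U) := .range hU fun x => ⟨x, hxU x⟩
  obtain ⟨x, hx⟩ := hτ _ hcov
  exact hnot x _ hcov hx.ge

theorem iPredetWinsPO_of_iiMarkovWinsG1
    (h : IIMarkovWinsG1 {𝒰 : Set (Set X) | IsOpenCover 𝒰} {𝒰 | IsOpenCover 𝒰}) :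
    IPredetWinsPO X := by
  obtain ⟨σ, hσ⟩ := h
  have hlegal : ∀ n 𝒰, IsOpenCover 𝒰 → σ 𝒰 n ∈ 𝒰 := fun n 𝒰 h𝒰 =>
    (hσ (fun _ => 𝒰) fun _ => h𝒰).1 n
  choose p hp using fun n => exists_forall_isOpen_exists_isOpenCover_subset (hlegal n)
  refine ⟨p, fun U hU => ?_⟩
  choose 𝒰 h𝒰 hsub using fun n => hp n (U n) (hU n).1 (hU n).2
  refine eq_univ_of_forall fun x => ?_
  obtain ⟨_, ⟨n, rfl⟩, hxn⟩ := (hσ 𝒰 h𝒰).2.exists_mem_of_mem x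
  exact mem_iUnion.2 ⟨n, hsub n hxn⟩

theorem iiMarkovWinsG1_of_iPredetWinsPO (h : IPredetWinsPO X) :
    IIMarkovWinsG1 {𝒰 : Set (Set X) | IsOpenCover 𝒰} {𝒰 | IsOpenCover 𝒰} := by
  obtain ⟨p, hp⟩ := h
  refine ⟨fun 𝒰 n => Classical.epsilon fun U => U ∈ 𝒰 ∧ p n ∈ U, fun a ha => ?_⟩
  have hchoice n : (Classical.epsilon fun U => U ∈ a n ∧ p n ∈ U) ∈ a n ∧
      p n ∈ Classical.epsilon fun U => U ∈ a n ∧ p n ∈ U :=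
    Classical.epsilon_spec ((ha n).exists_mem_of_mem (p n))
  refine ⟨fun n => (hchoice n).1, forall_mem_range.2 fun n => (ha n).1 _ (hchoice n).1, ?_⟩
  rw [sUnion_range]
  exact hp _ fun n => ⟨(ha n).1 _ (hchoice n).1, (hchoice n).2⟩

end RothbergerPointOpen

/-- For a topological space `X`, II has a winning Markov strategy in the
Rothberger game `G1(O_X, O_X)` iff I has a winning predetermined strategy in the
point-open game `PO(X)`. -/
theorem II_markov_wins_rothberger_iff_I_predet_wins_PO
    (X : Type*) [TopologicalSpace X] :
    IIMarkovWinsG1 {𝒰 : Set (Set X) | IsOpenCover 𝒰} {𝒰 : Set (Set X) | IsOpenCover 𝒰} ↔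
      IPredetWinsPO X :=
  ⟨iPredetWinsPO_of_iiMarkovWinsG1, iiMarkovWinsG1_of_iPredetWinsPO⟩
end

section
/- Let X be a completely regular Hausdorff (T3.5) space. The following are equivalent: (i) X is countable; (ii) player I has a winning predetermined strategy in the finite-open game FO(X); (iii) player I has a winning predetermined strategy in the game ΩFO(X). -/
open Set Filter Topology

/- Over a countable space I can enumerate all finite sets, so II's answers form an ω-cover.
Conversely, in a T₁ space a point missed by all of I's predetermined moves is avoided by II
answering `{x}ᶜ` every round, so I's moves cover `X` and `X` is a countable union of finite sets. -/

section PredeterminedStrategies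

variable {X : Type*} [TopologicalSpace X]

theorem isOmegaCover_range_of_forall_finset {U : ℕ → Set X} (hU : ∀ n, IsOpen (U n))
    (h : ∀ F : Finset X, ∃ n, ↑F ⊆ U n) : IsOmegaCover (range U) := by
  refine ⟨⟨forall_mem_range.2 hU, eq_univ_of_forall fun x => ?_⟩, fun F => ?_⟩
  · obtain ⟨n, hn⟩ := h {x}
    exact ⟨U n, mem_range_self n, hn (by simp)⟩
  · obtain ⟨n, hn⟩ := h F
    exact ⟨U n, mem_range_self n, hn⟩

theorem iPredetWinsOmegaFO_of_countable [Countable X] : IPredetWinsOmegaFO X := by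
  obtain ⟨p, hp⟩ := exists_surjective_nat (Finset X)
  refine ⟨p, fun U hU => isOmegaCover_range_of_forall_finset (fun n => (hU n).1) fun F => ?_⟩
  obtain ⟨n, rfl⟩ := hp F
  exact ⟨n, (hU n).2⟩

theorem IPredetWinsOmegaFO.iPredetWinsFO (h : IPredetWinsOmegaFO X) : IPredetWinsFO X := by
  obtain ⟨p, hp⟩ := h
  exact ⟨p, fun U hU => sUnion_range U ▸ (hp U hU).1.2⟩

theorem iUnion_eq_univ_of_predet_wins_FO [T1Space X] {p : ℕ → Finset X}
    (hp : ∀ U : ℕ → Set X, (∀ n, IsOpen (U n) ∧ ↑(p n) ⊆ U n) → (⋃ n, U n) = univ) :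
    (⋃ n, (p n : Set X)) = univ := by
  refine eq_univ_of_forall fun x => ?_
  by_contra hx
  have hmiss : ∀ n, ↑(p n) ⊆ ({x}ᶜ : Set X) := fun n y hy (hyx : y = x) =>
    hx (mem_iUnion.2 ⟨n, hyx ▸ hy⟩)
  have hcover := hp (fun _ => {x}ᶜ) fun n => ⟨isOpen_compl_singleton, hmiss n⟩
  simpa using hcover.ge (mem_univ x)

theorem IPredetWinsFO.countable [T1Space X] (h : IPredetWinsFO X) : Countable X := by
  obtain ⟨p, hp⟩ := h
  rw [← countable_univ_iff, ← iUnion_eq_univ_of_predet_wins_FO hp]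
  exact countable_iUnion fun n => (p n).finite_toSet.countable

end PredeterminedStrategies

/-- For a T3.5 space `X`, the following are equivalent:
(i) `X` is countable; (ii) I has a winning predetermined strategy in `FO(X)`;
(iii) I has a winning predetermined strategy in `ΩFO(X)`. -/
theorem countable_tfae_I_predet_wins_FO_omegaFO
    (X : Type*) [TopologicalSpace X] [T35Space X] :
    [Countable X, IPredetWinsFO X, IPredetWinsOmegaFO X].TFAE := by
  tfae_have 1 → 3 := fun _ => iPredetWinsOmegaFO_of_countable
  tfae_have 3 → 2 := IPredetWinsOmegaFO.iPredetWinsFO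
  tfae_have 2 → 1 := IPredetWinsFO.countable
  tfae_finish
end

section
/- Let X be a completely regular Hausdorff (T3.5) space. Player I has a winning predetermined strategy in Gruenhage's W-game on Cp(X) at the point 0 if and only if player I has a winning predetermined strategy in Gruenhage's clustering game on Cp(X) at the point 0. -/
open Set Filter Topology

/-
Convergence implies clustering, so only the converse needs an argument. Replacing I's
clustering strategy `U` by the decreasing strategy `n ↦ ⋂ k ≤ n, U k` makes it a W-strategy:
if II's answers `y` did not converge to `x`, some neighbourhood of `x` would be missed by a
subsequence `y ∘ φ`, and since `k ≤ φ k` this subsequence is a legal play against `U` without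
`x` as a cluster point.
-/

section

variable {Y : Type*} [TopologicalSpace Y] {x : Y}

theorem IPredetWinsGruW.iPredetWinsGruCluster (h : IPredetWinsGruW Y x) :
    IPredetWinsGruCluster Y x := by
  obtain ⟨U, hU, hwin⟩ := h
  exact ⟨U, hU, fun y hy => (hwin y hy).mapClusterPt⟩

theorem IPredetWinsGruCluster.iPredetWinsGruW (h : IPredetWinsGruCluster Y x) :
    IPredetWinsGruW Y x := by
  obtain ⟨U, hU, hwin⟩ := h
  refine ⟨fun n => ⋂ k ≤ n, U k, fun n => ⟨?_, mem_iInter₂.2 fun k _ => (hU k).2⟩, fun y hy => ?_⟩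
  · exact (finite_le_nat n).isOpen_biInter fun k _ => (hU k).1
  by_contra hy_not_tendsto
  obtain ⟨N, hN, hy_freq⟩ := not_tendsto_iff_exists_frequently_notMem.1 hy_not_tendsto
  obtain ⟨φ, hφ, hyφ⟩ := extraction_of_frequently_atTop hy_freq
  have hyφ_legal : ∀ k, y (φ k) ∈ U k := fun k => mem_iInter₂.1 (hy (φ k)) k hφ.le_apply
  obtain ⟨k, hk⟩ := (mapClusterPt_iff_frequently.1 (hwin _ hyφ_legal) N hN).exists
  exact hyφ k hk

theorem iPredetWinsGruW_iff_iPredetWinsGruCluster :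
    IPredetWinsGruW Y x ↔ IPredetWinsGruCluster Y x :=
  ⟨IPredetWinsGruW.iPredetWinsGruCluster, IPredetWinsGruCluster.iPredetWinsGruW⟩

end

theorem I_predet_wins_gruW_iff_I_predet_wins_gruCluster_general
    (X : Type*) [TopologicalSpace X] :
    IPredetWinsGruW (Cp X) (Cp.zero X) ↔ IPredetWinsGruCluster (Cp X) (Cp.zero X) :=
  iPredetWinsGruW_iff_iPredetWinsGruCluster

/-- For a T3.5 space `X`, I has a winning predetermined strategy in
Gruenhage's W-game on `Cp(X)` at `0` iff I has a winning predetermined strategy in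
Gruenhage's clustering game on `Cp(X)` at `0`. -/
theorem I_predet_wins_gruW_iff_I_predet_wins_gruCluster
    (X : Type*) [TopologicalSpace X] [T35Space X] :
    IPredetWinsGruW (Cp X) (Cp.zero X) ↔ IPredetWinsGruCluster (Cp X) (Cp.zero X) :=
  I_predet_wins_gruW_iff_I_predet_wins_gruCluster_general X
end

section
/- Let X be a topological space. If player I has a winning predetermined strategy in the ω-Rothberger game G1(Ω_X,Ω_X), then player II has a winning Markov strategy in the game ΩFO(X). -/
open Set Filter Topology

/-- For a topological space `X`, if I has a winning predetermined
strategy in the ω-Rothberger game `G1(Ω_X, Ω_X)`, then II has a winning Markov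
strategy in `ΩFO(X)`. -/
theorem I_predet_wins_omega_rothberger_implies_II_markov_wins_omegaFO
    (X : Type*) [TopologicalSpace X]
    (h : IPredetWinsG1 {𝒰 : Set (Set X) | IsOmegaCover 𝒰} {𝒰 : Set (Set X) | IsOmegaCover 𝒰}) :
    IIMarkovWinsOmegaFO X := by
  obtain ⟨𝒰, h𝒰, hwin⟩ := h
  choose V hV_mem hF_sub using fun n (F : Finset X) => (h𝒰 n).2 F
  refine ⟨fun F n => V n F, fun F n => ⟨(h𝒰 n).1.1 _ (hV_mem n F), hF_sub n F⟩, fun F hcov => ?_⟩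
  -- II's answers `V n (F n) ∈ 𝒰 n` are a legal play against I's winning strategy in `G1(Ω, Ω)`.
  exact hwin (fun n => V n (F n)) (fun n => hV_mem n (F n)) hcov
end

section
/- Let X be a topological space and x ∈ X. Then each of the following implies the next: (a) player I has a winning predetermined strategy in the selection game G1(D_X, Ω_{X,x}); (b) player II has a winning Markov strategy in the closure game CL(X,x); (c) player II has a winning Markov strategy in Gruenhage's clustering game at x; (d) player I has a winning predetermined strategy in the selection game G1(Ω_{X,x}, Ω_{X,x}). -/
/-!
(a) ⇒ (b): II answers `U` in round `n` with a point of `U ∩ Dₙ`, where `Dₙ` is I's `n`-th dense set.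
(b) ⇒ (c): a cluster point of a sequence lies in the closure of its range, so the same strategy works.
(c) ⇒ (d): split the rounds into the infinitely many blocks `{⟨n, k⟩ : k ∈ ℕ}` of `Nat.pair` and let
I's `n`-th move be the set of answers of II's Markov strategy `σ` in block `n` that do not specialize
to `x`. It accumulates at `x`: against the constant play `V` the answers in `V` do not cluster at
`x`, so they cannot all specialize to `x`. And II cannot win against it: a selection
`bₙ = σ(Vₙ, ⟨n, kₙ⟩)` is a subsequence of the play that puts `Vₙ` at round `⟨n, kₙ⟩`, hence does not
cluster at `x`; removing the finitely many early terms, none of which specializes to `x`, shows that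
`x` is not in the closure of the selection.
-/

open Set Filter Topology

section ClusterPoints

variable {X : Type*} [TopologicalSpace X] {x : X} {u : ℕ → X}

theorem MapClusterPt.mem_closure_range (h : MapClusterPt x atTop u) : x ∈ closure (range u) :=
  closure_mono (image_subset_range u _) (mapClusterPt_atTop_iff_forall_mem_closure.mp h 0)

theorem mapClusterPt_of_forall_specializes (h : ∀ n, u n ⤳ x) : MapClusterPt x atTop u :=
  mapClusterPt_iff_frequently.mpr fun _s hs =>
    Eventually.frequently (Eventually.of_forall fun n => (h n).pure_le_nhds hs)

theorem eventually_nhds_ne_of_not_specializes {y : X} (h : ¬ y ⤳ x) : ∀ᶠ z in 𝓝 x, z ≠ y := by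
  obtain ⟨s, hs, hys⟩ : ∃ s ∈ 𝓝 x, y ∉ s := by simpa [specializes_iff_pure, pure_le_iff] using h
  filter_upwards [hs] with z hz
  exact ne_of_mem_of_not_mem hz hys

theorem notMem_closure_range_of_not_mapClusterPt (h : ¬ MapClusterPt x atTop u)
    (hu : ∀ n, ¬ u n ⤳ x) : x ∉ closure (range u) := by
  obtain ⟨s, hs, hN⟩ : ∃ s ∈ 𝓝 x, ∀ᶠ n in atTop, u n ∉ s := by
    simpa [mapClusterPt_iff_frequently, not_frequently] using h
  obtain ⟨N, hN⟩ := eventually_atTop.mp hN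
  have hearly : ∀ᶠ z in 𝓝 x, ∀ n ∈ Iio N, z ≠ u n :=
    (eventually_all_finite (finite_Iio N)).mpr fun n _ =>
      eventually_nhds_ne_of_not_specializes (hu n)
  rw [mem_closure_iff_frequently, not_frequently]
  filter_upwards [hs, hearly] with z hzs hz
  rintro ⟨n, rfl⟩
  rcases lt_or_ge n N with hn | hn
  · exact hz n hn rfl
  · exact hN n hn hzs

end ClusterPoints

section PointPickingGames

variable {X : Type*} [TopologicalSpace X] {x : X}

theorem IPredetWinsG1.iiMarkovWinsCL
    (h : IPredetWinsG1 {D : Set X | Dense D} {A : Set X | x ∈ closure A}) :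
    IIMarkovWinsCL X x := by
  obtain ⟨D, hD, hwin⟩ := h
  have pick (U : Set X) (n : ℕ) : ∃ y, IsOpen U ∧ U.Nonempty → y ∈ U ∩ D n := by
    by_cases hU : IsOpen U ∧ U.Nonempty
    · exact ((hD n).inter_open_nonempty U hU.1 hU.2).imp fun _ hy _ => hy
    · exact ⟨x, fun h => absurd h hU⟩
  choose σ hσ using pick
  refine ⟨σ, fun U hU => ?_⟩
  have hmem n := hσ (U n) n (hU n)
  exact ⟨fun n => (hmem n).1, hwin _ fun n => (hmem n).2⟩

theorem IIMarkovWinsCL.iiMarkovWinsGruCluster (h : IIMarkovWinsCL X x) :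
    IIMarkovWinsGruCluster X x := by
  obtain ⟨σ, hσ⟩ := h
  refine ⟨σ, fun U hU => ?_⟩
  obtain ⟨hlegal, hclosure⟩ := hσ U fun n => ⟨(hU n).1, x, (hU n).2⟩
  exact ⟨hlegal, fun hcluster => hclosure hcluster.mem_closure_range⟩

def nonSpecializingAnswers (σ : Set X → ℕ → X) (x : X) (n : ℕ) : Set X :=
  {y | (∃ U k, IsOpen U ∧ x ∈ U ∧ σ U (Nat.pair n k) = y) ∧ ¬ y ⤳ x}

variable {σ : Set X → ℕ → X}

theorem mem_closure_nonSpecializingAnswers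
    (hσ : ∀ U : ℕ → Set X, (∀ n, IsOpen (U n) ∧ x ∈ U n) →
      (∀ n, σ (U n) n ∈ U n) ∧ ¬ MapClusterPt x atTop fun n => σ (U n) n) (n : ℕ) :
    x ∈ closure (nonSpecializingAnswers σ x n) := by
  refine mem_closure_iff.mpr fun V hV hxV => ?_
  obtain ⟨hlegal, hnot⟩ := hσ (fun _ => V) fun _ => ⟨hV, hxV⟩
  by_contra hempty
  refine hnot (MapClusterPt.of_comp (φ := Nat.pair n)
    (tendsto_atTop_mono (Nat.right_le_pair n) tendsto_id) ?_)
  refine mapClusterPt_of_forall_specializes fun k => ?_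
  by_contra hk
  exact hempty ⟨_, hlegal _, ⟨V, k, hV, hxV, rfl⟩, hk⟩

theorem notMem_closure_range_of_mem_nonSpecializingAnswers
    (hσ : ∀ U : ℕ → Set X, (∀ n, IsOpen (U n) ∧ x ∈ U n) →
      (∀ n, σ (U n) n ∈ U n) ∧ ¬ MapClusterPt x atTop fun n => σ (U n) n) {b : ℕ → X}
    (hb : ∀ n, b n ∈ nonSpecializingAnswers σ x n) : x ∉ closure (range b) := by
  choose V k hV hxV hbV using fun n => (hb n).1
  let W : ℕ → Set X := fun j =>
    if (Nat.unpair j).2 = k (Nat.unpair j).1 then V (Nat.unpair j).1 else univ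
  have hW n : W (Nat.pair n (k n)) = V n := by simp [W]
  obtain ⟨-, hnot⟩ := hσ W fun j => by
    unfold W; split_ifs
    exacts [⟨hV _, hxV _⟩, ⟨isOpen_univ, mem_univ x⟩]
  refine notMem_closure_range_of_not_mapClusterPt (fun hcluster => hnot ?_) fun n => (hb n).2
  refine MapClusterPt.of_comp (φ := fun n => Nat.pair n (k n))
    (tendsto_atTop_mono (fun n => Nat.left_le_pair n (k n)) tendsto_id) ?_
  convert hcluster
  funext n
  simp only [Function.comp_apply, hW, hbV]

theorem IIMarkovWinsGruCluster.iPredetWinsG1 (h : IIMarkovWinsGruCluster X x) :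
    IPredetWinsG1 {A : Set X | x ∈ closure A} {A : Set X | x ∈ closure A} :=
  let ⟨_, hσ⟩ := h
  ⟨nonSpecializingAnswers _ x, mem_closure_nonSpecializingAnswers hσ,
    fun _ hb => notMem_closure_range_of_mem_nonSpecializingAnswers hσ hb⟩

end PointPickingGames

/-- For a topological space `X` and `x ∈ X`, each of the following
implies the next: (a) I has a winning predetermined strategy in `G1(D_X, Ω_{X,x})`;
(b) II has a winning Markov strategy in the closure game `CL(X,x)`;
(c) II has a winning Markov strategy in Gruenhage's clustering game at `x`;
(d) I has a winning predetermined strategy in `G1(Ω_{X,x}, Ω_{X,x})`. -/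
theorem point_picking_limited_information_implication_chain
    (X : Type*) [TopologicalSpace X] (x : X) :
    (IPredetWinsG1 {D : Set X | Dense D} {A : Set X | x ∈ closure A} →
      IIMarkovWinsCL X x) ∧
    (IIMarkovWinsCL X x → IIMarkovWinsGruCluster X x) ∧
    (IIMarkovWinsGruCluster X x →
      IPredetWinsG1 {A : Set X | x ∈ closure A} {A : Set X | x ∈ closure A}) :=
  ⟨IPredetWinsG1.iiMarkovWinsCL, IIMarkovWinsCL.iiMarkovWinsGruCluster,
    IIMarkovWinsGruCluster.iPredetWinsG1⟩
end

section
/- Let X be a completely regular Hausdorff (T3.5) space. If player II has a winning Markov strategy in the game ΩFO(X), then player II has a winning Markov strategy in the discrete selection game CD(Cp(X)). -/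
open Set Filter Topology

/-!
Let `σ` be II's winning Markov strategy in `ΩFO(X)`. Facing a nonempty open `U ⊆ Cp(X)` in
round `n`, II takes `f ∈ U` and a finite `K ⊆ X` such that every function agreeing with `f`
on `K` lies in `U`, and answers with some `g ∈ U` equal to `n` off `σ(K, n)`; such `g` exists
by complete regularity. The finite sets `K` played this way form a play of `ΩFO(X)` lost by I,
so some finite `G ⊆ X` lies in none of the sets `σ(K, n)`: the `n`-th answer takes the value
`n` somewhere on `G`. Hence near any `f ∈ Cp(X)`, where the values at each `x ∈ G` stay below
`f x + 1`, only finitely many answers occur, and the answers form a closed discrete set.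
-/

section ClosedDiscrete

variable {Y : Type*} [TopologicalSpace Y] [T1Space Y]

theorem isClosedDiscrete_of_forall_exists_finite_inter {S : Set Y}
    (h : ∀ y, ∃ V, IsOpen V ∧ y ∈ V ∧ (V ∩ S).Finite) : IsClosedDiscrete S := by
  constructor
  · refine isOpen_compl_iff.1 <| isOpen_iff_forall_mem_open.2 fun y hy => ?_
    obtain ⟨V, hV, hyV, hfin⟩ := h y
    exact ⟨V \ (V ∩ S), fun z hz hzS => hz.2 ⟨hz.1, hzS⟩, hV.sdiff hfin.isClosed, hyV,
      fun hyS => hy hyS.2⟩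
  · intro y hy
    obtain ⟨V, hV, hyV, hfin⟩ := h y
    refine ⟨V \ ((V ∩ S) \ {y}), hV.sdiff (hfin.subset sdiff_subset).isClosed, ?_⟩
    ext z
    constructor
    · rintro ⟨⟨hzV, hz⟩, hzS⟩
      by_contra hne
      exact hz ⟨⟨hzV, hzS⟩, hne⟩
    · rintro rfl
      exact ⟨⟨hyV, fun hy' => hy'.2 rfl⟩, hy⟩

theorem isClosedDiscrete_range_of_forall_exists_finite_preimage {ι : Type*} {y : ι → Y}
    (h : ∀ z, ∃ V, IsOpen V ∧ z ∈ V ∧ (y ⁻¹' V).Finite) : IsClosedDiscrete (range y) :=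
  isClosedDiscrete_of_forall_exists_finite_inter fun z =>
    let ⟨V, hV, hzV, hfin⟩ := h z
    ⟨V, hV, hzV, by rw [inter_comm, ← image_preimage_eq_range_inter]; exact hfin.image y⟩

end ClosedDiscrete

theorem exists_finset_forall_not_subset_of_not_isOmegaCover {X ι : Type*} [TopologicalSpace X]
    {V : ι → Set X} (hV : ∀ i, IsOpen (V i)) (h : ¬ IsOmegaCover (range V)) :
    ∃ G : Finset X, ∀ i, ¬ ↑G ⊆ V i := by
  contrapose! h
  refine ⟨⟨?_, eq_univ_of_forall fun x => ?_⟩, fun G => ?_⟩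
  · rintro _ ⟨i, rfl⟩
    exact hV i
  · obtain ⟨i, hi⟩ := h {x}
    exact ⟨V i, mem_range_self i, hi (by simp)⟩
  · obtain ⟨i, hi⟩ := h G
    exact ⟨V i, mem_range_self i, hi⟩

theorem exists_continuous_eqOn_zero_eqOn_one_of_finset_subset {X : Type*} [TopologicalSpace X]
    [CompletelyRegularSpace X] {K : Finset X} {W : Set X} (hW : IsOpen W) (hKW : ↑K ⊆ W) :
    ∃ f : X → ℝ, Continuous f ∧ EqOn f 0 K ∧ EqOn f 1 Wᶜ := by
  have separate : ∀ x ∈ K, ∃ f : X → ℝ, Continuous f ∧ f x = 0 ∧ EqOn f 1 Wᶜ := by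
    intro x hx
    obtain ⟨f, hf, hfx, hfW⟩ :=
      CompletelyRegularSpace.completely_regular_isOpen x W hW (hKW hx)
    exact ⟨fun z => f z, continuous_subtype_val.comp hf, by simp [hfx],
      fun z hz => by simpa using congrArg Subtype.val (hfW hz)⟩
  choose! φ hφ hφ0 hφ1 using separate
  exact ⟨fun z => ∏ x ∈ K, φ x z, continuous_finsetProd _ hφ,
    fun x hx => Finset.prod_eq_zero hx (hφ0 x hx),
    fun z hz => Finset.prod_eq_one fun x hx => hφ1 x hx hz⟩

namespace Cp

variable {X : Type*} [TopologicalSpace X]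

instance : T2Space (Cp X) := inferInstanceAs (T2Space {f : X → ℝ // Continuous f})

theorem continuous_eval (x : X) : Continuous fun f : Cp X => f.1 x :=
  (continuous_apply x).comp continuous_subtype_val

theorem exists_finset_forall_eqOn_mem {U : Set (Cp X)} (hU : IsOpen U) {f : Cp X}
    (hf : f ∈ U) : ∃ K : Finset X, ∀ g : Cp X, EqOn g.1 f.1 K → g ∈ U := by
  obtain ⟨V, hV, rfl⟩ := isOpen_induced_iff.1 hU
  obtain ⟨K, u, hfu, hKu⟩ := isOpen_pi_iff.1 hV f.1 hf
  exact ⟨K, fun g hg => hKu fun x hx => (hg hx).symm ▸ (hfu x hx).2⟩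

theorem exists_finset_forall_exists_mem_eqOn_compl [CompletelyRegularSpace X]
    {U : Set (Cp X)} (hU : IsOpen U) (hne : U.Nonempty) :
    ∃ K : Finset X, ∀ W, IsOpen W → ↑K ⊆ W → ∀ c : ℝ, ∃ g ∈ U, EqOn g.1 (fun _ => c) Wᶜ := by
  obtain ⟨f, hf⟩ := hne
  obtain ⟨K, hK⟩ := exists_finset_forall_eqOn_mem hU hf
  refine ⟨K, fun W hW hKW c => ?_⟩
  obtain ⟨ψ, hψ, hψ0, hψ1⟩ := exists_continuous_eqOn_zero_eqOn_one_of_finset_subset hW hKW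
  let g : Cp X :=
    ⟨fun x => f.1 x + (c - f.1 x) * ψ x, f.2.add ((continuous_const.sub f.2).mul hψ)⟩
  refine ⟨g, hK g fun x hx => ?_, fun x hx => ?_⟩
  · simp [g, hψ0 hx]
  · simp [g, hψ1 hx]

theorem isClosedDiscrete_range_of_forall_exists_mem_le {y : ℕ → Cp X} {G : Finset X}
    (h : ∀ n : ℕ, ∃ x ∈ G, (n : ℝ) ≤ (y n).1 x) : IsClosedDiscrete (range y) := by
  refine isClosedDiscrete_range_of_forall_exists_finite_preimage fun f => ?_
  refine ⟨⋂ x ∈ G, (fun g : Cp X => g.1 x) ⁻¹' Iio (f.1 x + 1),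
    isOpen_biInter_finset fun x _ => isOpen_Iio.preimage (continuous_eval x),
    mem_iInter₂.2 fun x _ => lt_add_one (f.1 x), ?_⟩
  refine (G.finite_toSet.biUnion fun x _ => finite_lt_nat ⌈f.1 x + 1⌉₊).subset fun n hn => ?_
  obtain ⟨x, hxG, hx⟩ := h n
  exact mem_biUnion hxG (Nat.lt_ceil.2 (hx.trans_lt (mem_iInter₂.1 hn x hxG)))

end Cp

/-- For a T3.5 space `X`, if II has a winning Markov strategy in
`ΩFO(X)`, then II has a winning Markov strategy in the discrete selection game
`CD(Cp(X))`. -/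
theorem II_markov_wins_omegaFO_implies_II_markov_wins_CD_Cp
    (X : Type*) [TopologicalSpace X] [T35Space X]
    (h : IIMarkovWinsOmegaFO X) :
    IIMarkovWinsCD (Cp X) := by
  obtain ⟨σ, hσ, hσwin⟩ := h
  have reply : ∀ U : Set (Cp X), IsOpen U → U.Nonempty → ∀ n : ℕ,
      ∃ g ∈ U, ∃ K : Finset X, EqOn g.1 (fun _ => (n : ℝ)) (σ K n)ᶜ := by
    intro U hU hne n
    obtain ⟨K, hK⟩ := Cp.exists_finset_forall_exists_mem_eqOn_compl hU hne
    obtain ⟨g, hgU, hg⟩ := hK (σ K n) (hσ K n).1 (hσ K n).2 n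
    exact ⟨g, hgU, K, hg⟩
  have : Nonempty (Cp X) := ⟨Cp.zero X⟩
  choose! g hgU K hgK using reply
  refine ⟨g, fun U hU => ⟨fun n => hgU _ (hU n).1 (hU n).2 n, ?_⟩⟩
  obtain ⟨G, hG⟩ := exists_finset_forall_not_subset_of_not_isOmegaCover
    (fun n => (hσ _ n).1) (hσwin fun n => K (U n) n)
  refine Cp.isClosedDiscrete_range_of_forall_exists_mem_le (G := G) fun n => ?_
  obtain ⟨x, hxG, hx⟩ := not_subset.1 (hG n)
  exact ⟨x, hxG, (hgK _ (hU n).1 (hU n).2 n hx).ge⟩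
end
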